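/- For every n ≥ 2 and every party k, the n-qubit cat state tensor a (defined by a i = 1/√2 if i is the constant-0 or constant-1 tuple and a i = 0 otherwise) satisfies det(M_k * M_kᴴ − 1) = 1/4, where M_k is the k-th flattening of a, M_kᴴ its conjugate transpose, and 1 the identity matrix of the same size as M_k * M_kᴴ. -/

import Mathlib

open Matrix Function

noncomputable section

/-- Insert `j` at position `k` into the partial index tuple `I`, producing a full tuple. -/
def insertAt {n : ℕ} (k : Fin n) (I : {s : Fin n // s ≠ k} → Fin 2) (j : Fin 2) :
    Fin n → Fin 2 :=
  fun t => if h : t = k then j else I ⟨t, h⟩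

/-- The `k`-th flattening of an `n`-qubit amplitude tensor `a`. -/
def flatten {n : ℕ} (a : (Fin n → Fin 2) → ℂ) (k : Fin n) :
    Matrix ({s : Fin n // s ≠ k} → Fin 2) (Fin 2) ℂ :=
  fun I j => a (insertAt k I j)

/-! The cat state has flattening `M_k = (e₀₀…₀ e₁₁…₁) / √2`, whose two columns are multiples of
distinct standard basis vectors. Hence `M_k M_kᴴ - 1` is diagonal, with entry `1/2 - 1` at
the two constant tuples and `-1` at the other `2 ^ (n - 1) - 2` rows; for `n ≥ 2` that number is
even, so the determinant is `(-1/2)² = 1/4`. -/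

section

variable {ι κ R : Type*} [DecidableEq ι] [CommRing R]

lemma det_diagonal_ite_mem [Fintype ι] (S : Finset ι) (a b : R) :
    (diagonal fun i => if i ∈ S then a else b).det =
      a ^ S.card * b ^ (Fintype.card ι - S.card) := by
  rw [det_diagonal, Finset.prod_ite, Finset.prod_const, Finset.prod_const,
    Finset.filter_mem_eq_inter, Finset.univ_inter, Finset.filter_not,
    Finset.filter_mem_eq_inter, Finset.univ_inter, Finset.card_univ_sdiff]

variable [StarRing R] [Fintype κ]

lemma mul_conjTranspose_of_ite_eq (v : κ → ι) (hv : Injective v) (c : R) :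
    (of fun i j => if i = v j then c else 0) * (of fun i j => if i = v j then c else 0)ᴴ =
      diagonal fun i => if i ∈ Finset.univ.image v then c * star c else 0 := by
  ext i i'
  simp only [mul_apply, conjTranspose_apply, of_apply, diagonal_apply, Finset.mem_image,
    Finset.mem_univ, true_and, apply_ite star, star_zero, mul_ite, ite_mul, zero_mul, mul_zero]
  by_cases hi : ∃ j, v j = i
  · obtain ⟨j₀, rfl⟩ := hi
    rw [Fintype.sum_eq_single j₀ fun j hj => by simp [(hv.ne hj).symm]]
    simp [eq_comm]
  · have hi' : ∀ j, i ≠ v j := fun j h => hi ⟨j, h.symm⟩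
    simp [hi', hi]

lemma det_mul_conjTranspose_sub_one_of_ite_eq [Fintype ι] (v : κ → ι) (hv : Injective v)
    (c : R) :
    ((of fun i j => if i = v j then c else 0) * (of fun i j => if i = v j then c else 0)ᴴ -
        1).det = (c * star c - 1) ^ Fintype.card κ * (-1) ^ (Fintype.card ι - Fintype.card κ) := by
  rw [mul_conjTranspose_of_ite_eq v hv, ← diagonal_one, diagonal_sub]
  simp only [ite_sub, zero_sub]
  rw [det_diagonal_ite_mem, Finset.card_image_of_injective _ hv, Finset.card_univ]

end

lemma insertAt_eq_const_iff {n : ℕ} (k : Fin n) (I : {s : Fin n // s ≠ k} → Fin 2)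
    (j v : Fin 2) : insertAt k I j = (fun _ => v) ↔ j = v ∧ I = fun _ => v := by
  constructor
  · intro h
    refine ⟨by simpa [insertAt] using congrFun h k, funext fun s => ?_⟩
    simpa [insertAt, s.2] using congrFun h s.1
  · rintro ⟨rfl, rfl⟩
    funext t
    simp [insertAt]

def catState (n : ℕ) : (Fin n → Fin 2) → ℂ :=
  fun i => if (i = fun _ => 0) ∨ (i = fun _ => 1) then (1 / Real.sqrt 2 : ℂ) else 0

lemma flatten_catState {n : ℕ} (k : Fin n) :
    flatten (catState n) k =
      of fun I j => if I = (fun _ => j) then (1 / Real.sqrt 2 : ℂ) else 0 := by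
  ext I j
  simp only [flatten, catState, of_apply]
  fin_cases j <;> simp [insertAt_eq_const_iff]

lemma card_partialIndex {n : ℕ} (k : Fin n) :
    Fintype.card ({s : Fin n // s ≠ k} → Fin 2) = 2 ^ (n - 1) := by
  simp [Fintype.card_subtype_compl]

lemma inv_sqrt_two_mul_star : (1 / Real.sqrt 2 : ℂ) * star (1 / Real.sqrt 2 : ℂ) = 1 / 2 := by
  have h : ((Real.sqrt 2 : ℝ) : ℂ) ^ 2 = 2 := by norm_cast; simp
  rw [Complex.star_def, map_div₀, map_one, Complex.conj_ofReal, div_mul_div_comm, one_mul, ← sq, h]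

/-- For the `n`-qubit cat state, `det (M_k M_kᴴ - 1) = 1/4` for every party `k`. -/
theorem catState_det_eq_quarter {n : ℕ} (hn : 2 ≤ n) (k : Fin n) :
    Matrix.det
      (flatten (fun i : Fin n → Fin 2 =>
          if (i = fun _ => 0) ∨ (i = fun _ => 1) then (1 / Real.sqrt 2 : ℂ) else 0) k *
        (flatten (fun i : Fin n → Fin 2 =>
          if (i = fun _ => 0) ∨ (i = fun _ => 1) then (1 / Real.sqrt 2 : ℂ) else 0) k)ᴴ
        - 1) = 1 / 4 := by
  change (flatten (catState n) k * (flatten (catState n) k)ᴴ - 1).det = 1 / 4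
  have : Nontrivial (Fin n) := Fin.nontrivial_iff_two_le.mpr hn
  have : Nonempty {s : Fin n // s ≠ k} := nonempty_subtype.mpr (exists_ne k)
  have h_even : Even (2 ^ (n - 1) - 2) := (Nat.even_pow.mpr ⟨even_two, by omega⟩).tsub even_two
  rw [flatten_catState, det_mul_conjTranspose_sub_one_of_ite_eq (fun j _ => j) const_injective,
    card_partialIndex, Fintype.card_fin, inv_sqrt_two_mul_star, h_even.neg_one_pow]
  norm_num
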